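/- arXiv:math/0406280 — 4 statements merged into one kernel-verified Lean document; each statement's English description precedes it below -/
import Mathlib

section
/- Let (K,d) be a nonempty finite metric space and ν a probability measure on K such that E_d(ν) consists of a single point c. Let (T_n)_{n≥1} be a sequence of independent, identically distributed K-valued random variables with law ν, and for each n let g_n(y) = (1/n) Σ_{i=1}^n d(T_i,y) and let y_n be any element of argmin_{y∈K} g_n(y). Then d(y_n, c) → 0 almost surely as n → ∞; equivalently, almost surely argmin_{y∈K} g_n = {c} for all sufficiently large n. -/
/-!
By the strong law of large numbers, applied to the finitely many real random variables
`d(Tᵢ, y)`, almost surely `gₙ → g` pointwise on `K`. Since `K` is finite and `c` is the strict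
minimizer of `g`, the finitely many gaps `g y - g c > 0` are eventually reproduced by `gₙ`, so
`c` is eventually the unique minimizer of `gₙ` and `yₙ = c` from some point on.
-/

open MeasureTheory Filter ProbabilityTheory Topology

lemma apply_lt_apply_of_setOf_forall_le_eq_singleton {α β : Type*} [LinearOrder β]
    {g : α → β} {c : α} (h : {y | ∀ y', g y ≤ g y'} = {c}) {y : α} (hy : y ≠ c) :
    g c < g y := by
  have hcmin : c ∈ {y | ∀ y', g y ≤ g y'} := h ▸ rfl
  have hy_not : y ∉ {y | ∀ y', g y ≤ g y'} := by rwa [h]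
  obtain ⟨y', hlt⟩ : ∃ y', g y' < g y := by simpa using hy_not
  exact (hcmin y').trans_lt hlt

lemma eventually_eq_of_tendsto_of_forall_lt {ι K : Type*} [Finite K] {l : Filter ι}
    {f : ι → K → ℝ} {g : K → ℝ} {c : K} (hf : ∀ y, Tendsto (f · y) l (𝓝 (g y)))
    (hc : ∀ y ≠ c, g c < g y) {x : ι → K} (hx : ∀ᶠ n in l, f n (x n) ≤ f n c) :
    ∀ᶠ n in l, x n = c := by
  have hsep : ∀ᶠ n in l, ∀ y, y ≠ c → f n c < f n y :=
    eventually_all.2 fun y => by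
      by_cases hy : y = c
      · exact Eventually.of_forall fun _ h => absurd hy h
      · exact ((hf c).eventually_lt (hf y) (hc y hy)).mono fun _ h _ => h
  filter_upwards [hsep, hx] with n hsep hx
  by_contra hne
  exact hx.not_gt (hsep _ hne)

lemma ae_tendsto_average_comp_of_iIndepFun {Ω K : Type*} [MeasurableSpace Ω] [MeasurableSpace K]
    {P : Measure Ω} {ν : Measure K} {T : ℕ → Ω → K} (hT : ∀ i, Measurable (T i))
    (hindep : iIndepFun T P) (hlaw : ∀ i, P.map (T i) = ν)
    {φ : K → ℝ} (hφ : Measurable φ) (hφν : Integrable φ ν) :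
    ∀ᵐ ω ∂P, Tendsto (fun n : ℕ => (∑ i ∈ Finset.range n, φ (T i ω)) / n) atTop
      (𝓝 (∫ x, φ x ∂ν)) := by
  have hint : Integrable (φ ∘ T 0) P := by
    rw [← integrable_map_measure (hlaw 0 ▸ hφ.aestronglyMeasurable) (hT 0).aemeasurable, hlaw 0]
    exact hφν
  have hident : ∀ i, IdentDistrib (φ ∘ T i) (φ ∘ T 0) P P := fun i =>
    (IdentDistrib.mk (hT i).aemeasurable (hT 0).aemeasurable (by rw [hlaw i, hlaw 0])).comp hφ
  have hpair : Pairwise fun i j => IndepFun (φ ∘ T i) (φ ∘ T j) P := fun i j hij =>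
    (hindep.indepFun hij).comp hφ hφ
  have hmean : ∫ ω, φ (T 0 ω) ∂P = ∫ x, φ x ∂ν := by
    rw [← hlaw 0, integral_map (hT 0).aemeasurable (hlaw 0 ▸ hφ.aestronglyMeasurable)]
  simpa only [Function.comp_apply, hmean] using strong_law_ae_real (fun i => φ ∘ T i) hint hpair hident

theorem lln_finite_metric_space_general {K : Type*} [Fintype K] [MetricSpace K]
    [MeasurableSpace K] [BorelSpace K]
    (ν : Measure K) [IsProbabilityMeasure ν] (c : K)
    (hc : {y : K | ∀ y' : K, (∫ x, dist y x ∂ν) ≤ ∫ x, dist y' x ∂ν} = {c})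
    {Ω : Type*} [MeasurableSpace Ω] (P : Measure Ω)
    (T : ℕ → Ω → K) (hTmeas : ∀ i, Measurable (T i))
    (hTindep : ProbabilityTheory.iIndepFun T P)
    (hTlaw : ∀ i, P.map (T i) = ν)
    (yn : ℕ → Ω → K)
    (hyn : ∀ (n : ℕ) (ω : Ω), ∀ y : K,
      (1 / (n : ℝ)) * ∑ i ∈ Finset.range n, dist (T i ω) (yn n ω) ≤
      (1 / (n : ℝ)) * ∑ i ∈ Finset.range n, dist (T i ω) y) :
    ∀ᵐ ω ∂P, Filter.Tendsto (fun n => dist (yn n ω) c) Filter.atTop (nhds 0) := by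
  have hslln : ∀ᵐ ω ∂P, ∀ y, Tendsto (fun n : ℕ => (∑ i ∈ Finset.range n, dist (T i ω) y) / n)
      atTop (𝓝 (∫ x, dist y x ∂ν)) := ae_all_iff.2 fun y => by
    simpa only [dist_comm y, id_eq] using ae_tendsto_average_comp_of_iIndepFun hTmeas hTindep hTlaw
      (continuous_id.dist continuous_const).measurable Integrable.of_finite
  filter_upwards [hslln] with ω hω
  have hyn_eq : ∀ᶠ n in atTop, yn n ω = c :=
    eventually_eq_of_tendsto_of_forall_lt hω
      (fun _ => apply_lt_apply_of_setOf_forall_le_eq_singleton hc)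
      (Eventually.of_forall fun n => by simpa only [one_div_mul_eq_div] using hyn n ω c)
  exact tendsto_const_nhds.congr' (hyn_eq.mono fun n h => by simp [h])

/-- Law of large numbers on a finite metric space. Let (K,d) be a nonempty finite
metric space and ν a probability measure on K whose d-mean set
E_d(ν) = argmin_y ∫ d(y,x) dν(x) is the singleton {c}. Let (Tₙ) be i.i.d. K-valued
random variables with law ν and let yₙ(ω) be any minimizer of
g_n(y) = (1/n) Σ_{i<n} d(T_i(ω),y). Then d(yₙ,c) → 0 almost surely. -/
theorem lln_finite_metric_space {K : Type*} [Fintype K] [Nonempty K] [MetricSpace K]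
    [MeasurableSpace K] [BorelSpace K]
    (ν : Measure K) [IsProbabilityMeasure ν] (c : K)
    (hc : {y : K | ∀ y' : K, (∫ x, dist y x ∂ν) ≤ ∫ x, dist y' x ∂ν} = {c})
    {Ω : Type*} [MeasurableSpace Ω] (P : Measure Ω) [IsProbabilityMeasure P]
    (T : ℕ → Ω → K) (hTmeas : ∀ i, Measurable (T i))
    (hTindep : ProbabilityTheory.iIndepFun T P)
    (hTlaw : ∀ i, P.map (T i) = ν)
    (yn : ℕ → Ω → K)
    (hyn : ∀ (n : ℕ) (ω : Ω), ∀ y : K,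
      (1 / (n : ℝ)) * ∑ i ∈ Finset.range n, dist (T i ω) (yn n ω) ≤
      (1 / (n : ℝ)) * ∑ i ∈ Finset.range n, dist (T i ω) y) :
    ∀ᵐ ω ∂P, Filter.Tendsto (fun n => dist (yn n ω) c) Filter.atTop (nhds 0) :=
  lln_finite_metric_space_general ν c hc P T hTmeas hTindep hTlaw yn hyn
end

section
/- (Sverdrup-Thygeson) Let (K,d) be a nonempty compact metric space and ν a Borel probability measure on K such that E_d(ν) consists of a single point c. Let (T_n)_{n≥1} be a sequence of independent, identically distributed K-valued random variables with law ν, and for each n let g_n(y) = (1/n) Σ_{i=1}^n d(T_i,y). Then almost surely, sup_{a ∈ argmin g_n} d(a, c) → 0 as n → ∞. -/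
/-!
By the strong law of large numbers, applied at the points of a countable dense set, almost surely
the empirical mean distances `g_n` converge to the mean distance `g` on that set. All `g_n` and `g`
are 1-Lipschitz, so the convergence holds everywhere and is uniform on the compact space `K`.
Off the ball of radius `ε` around the unique minimizer `c`, the continuous function `g` exceeds
`g c` by a fixed margin, which a uniformly close `g_n` cannot undo; hence eventually every
minimizer of `g_n` lies within `ε` of `c`.
-/

open MeasureTheory Filter Finset Topology

theorem Equicontinuous.tendstoUniformly_of_tendsto_dense {ι X α : Type*} [TopologicalSpace X]
    [CompactSpace X] [UniformSpace α] {l : Filter ι} {F : ι → X → α} {f : X → α}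
    (hF : Equicontinuous F) (hf : Continuous f) {s : Set X} (hs : Dense s)
    (h : ∀ x ∈ s, Tendsto (F · x) l (𝓝 (f x))) : TendstoUniformly F f l := by
  have hconv : ∀ x, Tendsto (F · x) l (𝓝 (f x)) := fun x =>
    (hF.isClosed_setOfPred_tendsto hf).closure_subset_iff.2 h (hs.closure_eq ▸ Set.mem_univ x)
  exact UniformFun.tendsto_iff_tendstoUniformly.1
    ((hF.tendsto_uniformFun_iff_pi l f).2 (tendsto_pi_nhds.2 hconv))

theorem lt_of_setOf_forall_le_eq_singleton {X β : Type*} [LinearOrder β] {f : X → β} {c : X}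
    (h : {y | ∀ y', f y ≤ f y'} = {c}) {y : X} (hy : y ≠ c) : f c < f y := by
  have hc : ∀ y', f c ≤ f y' := (Set.ext_iff.1 h c).2 rfl
  refine (hc y).lt_of_ne fun hcy => hy ?_
  exact (Set.ext_iff.1 h y).1 fun y' => hcy ▸ hc y'

section Argmin

variable {X ι : Type*} [PseudoMetricSpace X] {l : Filter ι}

theorem TendstoUniformly.eventually_dist_lt_of_forall_le [CompactSpace X] {F : ι → X → ℝ}
    {f : X → ℝ} (hF : TendstoUniformly F f l) (hf : Continuous f) {c : X}
    (hc : ∀ y, y ≠ c → f c < f y) {ε : ℝ} (hε : 0 < ε) :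
    ∀ᶠ n in l, ∀ y, (∀ y', F n y ≤ F n y') → dist y c < ε := by
  have hfar : IsCompact {y | ε ≤ dist y c} :=
    (isClosed_le continuous_const (continuous_id.dist continuous_const)).isCompact
  obtain ⟨a, hca, ha⟩ := hfar.exists_forall_le' hf.continuousOn fun y hy =>
    hc y fun hyc => by rw [Set.mem_ofPred_eq, hyc, dist_self] at hy; linarith
  filter_upwards [Metric.tendstoUniformly_iff.1 hF ((a - f c) / 2) (by linarith)]
    with n hn y hy
  by_contra! hyc
  have hny := hn y
  have hnc := hn c
  rw [Real.dist_eq, abs_lt] at hny hnc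
  linarith [hy c, ha y hyc]

theorem tendsto_sSup_image_dist_of_eventually {S : ι → Set X} {c : X}
    (h : ∀ ε > 0, ∀ᶠ n in l, ∀ y ∈ S n, dist y c < ε) :
    Tendsto (fun n => sSup ((dist · c) '' S n)) l (𝓝 0) := by
  refine Metric.tendsto_nhds.2 fun ε hε => ?_
  filter_upwards [h (ε / 2) (half_pos hε)] with n hn
  have hle : sSup ((dist · c) '' S n) ≤ ε / 2 :=
    Real.sSup_le (by rintro _ ⟨y, hy, rfl⟩; exact (hn y hy).le) (by linarith)
  have hnonneg : 0 ≤ sSup ((dist · c) '' S n) :=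
    Real.sSup_nonneg (by rintro _ ⟨y, -, rfl⟩; exact dist_nonneg)
  rw [Real.dist_eq, sub_zero, abs_of_nonneg hnonneg]
  linarith

end Argmin

section MeanDistance

variable {K : Type*} [PseudoMetricSpace K]

theorem lipschitzWith_average_dist (x : ℕ → K) (n : ℕ) :
    LipschitzWith 1 fun y => 1 / (n : ℝ) * ∑ i ∈ range n, dist (x i) y := by
  refine LipschitzWith.of_le_add fun y y' => ?_
  have hsum : ∑ i ∈ range n, dist (x i) y ≤ ∑ i ∈ range n, dist (x i) y' + n * dist y y' := by
    calc ∑ i ∈ range n, dist (x i) y ≤ ∑ i ∈ range n, (dist (x i) y' + dist y y') :=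
          sum_le_sum fun i _ => dist_triangle_right _ _ _
      _ = ∑ i ∈ range n, dist (x i) y' + n * dist y y' := by
          rw [sum_add_distrib, sum_const, card_range, nsmul_eq_mul]
  rcases n.eq_zero_or_pos with rfl | hn
  · simp
  calc 1 / (n : ℝ) * ∑ i ∈ range n, dist (x i) y
      ≤ 1 / (n : ℝ) * (∑ i ∈ range n, dist (x i) y' + n * dist y y') := by gcongr
    _ = 1 / (n : ℝ) * ∑ i ∈ range n, dist (x i) y' + dist y y' := by field_simp

variable [MeasurableSpace K] [OpensMeasurableSpace K]

theorem integrable_dist_left [CompactSpace K] (ν : Measure K) [IsFiniteMeasure ν] (y : K) :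
    Integrable (fun x => dist y x) ν :=
  (continuous_const.dist continuous_id).integrable_of_hasCompactSupport
    (HasCompactSupport.of_compactSpace _)

theorem lipschitzWith_integral_dist [CompactSpace K] (ν : Measure K) [IsProbabilityMeasure ν] :
    LipschitzWith 1 fun y => ∫ x, dist y x ∂ν := by
  refine LipschitzWith.of_le_add fun y y' => ?_
  calc ∫ x, dist y x ∂ν ≤ ∫ x, (dist y' x + dist y y') ∂ν :=
        integral_mono (integrable_dist_left ν y)
          ((integrable_dist_left ν y').add (integrable_const _))
          fun x => (dist_triangle y y' x).trans_eq (add_comm _ _)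
    _ = ∫ x, dist y' x ∂ν + dist y y' := by
        rw [integral_add (integrable_dist_left ν y') (integrable_const _), integral_const]
        simp

end MeanDistance

section StrongLaw

open ProbabilityTheory

theorem ae_tendsto_average_comp {Ω K : Type*} [MeasurableSpace Ω] [MeasurableSpace K]
    {P : Measure Ω} {ν : Measure K} {T : ℕ → Ω → K} (hTmeas : ∀ i, Measurable (T i))
    (hTindep : iIndepFun T P) (hTlaw : ∀ i, P.map (T i) = ν) {f : K → ℝ} (hf : Measurable f)
    (hfν : Integrable f ν) :
    ∀ᵐ ω ∂P, Tendsto (fun n : ℕ => 1 / (n : ℝ) * ∑ i ∈ range n, f (T i ω)) atTop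
      (𝓝 (∫ x, f x ∂ν)) := by
  have hident : ∀ i, IdentDistrib (f ∘ T i) (f ∘ T 0) P P := fun i =>
    (IdentDistrib.mk (hTmeas i).aemeasurable (hTmeas 0).aemeasurable
      (by rw [hTlaw i, hTlaw 0])).comp hf
  have hint : Integrable (f ∘ T 0) P := by
    rw [← hTlaw 0] at hfν
    exact hfν.comp_measurable (hTmeas 0)
  have hmean : ∫ ω, (f ∘ T 0) ω ∂P = ∫ x, f x ∂ν := by
    rw [← hTlaw 0, integral_map (hTmeas 0).aemeasurable hf.aestronglyMeasurable]
    rfl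
  filter_upwards [strong_law_ae_real (fun i => f ∘ T i) hint
    (fun i j hij => (hTindep.indepFun hij).comp hf hf) hident] with ω hω
  rw [hmean] at hω
  simpa only [one_div_mul_eq_div, Function.comp_apply] using hω

end StrongLaw

theorem sverdrup_thygeson_lln_general {K : Type*} [MetricSpace K] [CompactSpace K]
    [MeasurableSpace K] [BorelSpace K]
    (ν : Measure K) [IsProbabilityMeasure ν] (c : K)
    (hc : {y : K | ∀ y' : K, (∫ x, dist y x ∂ν) ≤ ∫ x, dist y' x ∂ν} = {c})
    {Ω : Type*} [MeasurableSpace Ω] (P : Measure Ω)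
    (T : ℕ → Ω → K) (hTmeas : ∀ i, Measurable (T i))
    (hTindep : ProbabilityTheory.iIndepFun T P)
    (hTlaw : ∀ i, P.map (T i) = ν) :
    ∀ᵐ ω ∂P, Filter.Tendsto
      (fun n : ℕ => sSup ((fun a => dist a c) ''
        {y : K | ∀ y' : K,
          (1 / (n : ℝ)) * ∑ i ∈ Finset.range n, dist (T i ω) y ≤
          (1 / (n : ℝ)) * ∑ i ∈ Finset.range n, dist (T i ω) y'}))
      Filter.atTop (nhds 0) := by
  have hg := (lipschitzWith_integral_dist ν).continuous
  obtain ⟨s, hs_count, hs_dense⟩ := TopologicalSpace.exists_countable_dense K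
  have hlln : ∀ᵐ ω ∂P, ∀ y ∈ s, Tendsto (fun n : ℕ => 1 / (n : ℝ) *
      ∑ i ∈ range n, dist (T i ω) y) atTop (𝓝 (∫ x, dist y x ∂ν)) := by
    refine (ae_ball_iff hs_count).2 fun y _ => ?_
    simp_rw [dist_comm y]
    exact ae_tendsto_average_comp hTmeas hTindep hTlaw (measurable_id.dist measurable_const)
      (by simpa only [dist_comm] using integrable_dist_left ν y)
  filter_upwards [hlln] with ω hω
  have hunif := (LipschitzWith.uniformEquicontinuous _ 1
    (lipschitzWith_average_dist (T · ω))).equicontinuous.tendstoUniformly_of_tendsto_dense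
    hg hs_dense hω
  exact tendsto_sSup_image_dist_of_eventually fun ε hε =>
    hunif.eventually_dist_lt_of_forall_le hg (fun _ => lt_of_setOf_forall_le_eq_singleton hc) hε

/-- (Sverdrup-Thygeson) Let (K,d) be a nonempty compact metric space and ν a Borel
probability measure on K whose d-mean set E_d(ν) = argmin_y ∫ d(y,x) dν(x) is the
singleton {c}. Let (Tₙ) be i.i.d. K-valued random variables with law ν and let
g_n(y) = (1/n) Σ_{i<n} d(T_i,y). Then almost surely
sup_{a ∈ argmin g_n} d(a,c) → 0 as n → ∞. -/
theorem sverdrup_thygeson_lln {K : Type*} [MetricSpace K] [CompactSpace K] [Nonempty K]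
    [MeasurableSpace K] [BorelSpace K]
    (ν : Measure K) [IsProbabilityMeasure ν] (c : K)
    (hc : {y : K | ∀ y' : K, (∫ x, dist y x ∂ν) ≤ ∫ x, dist y' x ∂ν} = {c})
    {Ω : Type*} [MeasurableSpace Ω] (P : Measure Ω) [IsProbabilityMeasure P]
    (T : ℕ → Ω → K) (hTmeas : ∀ i, Measurable (T i))
    (hTindep : ProbabilityTheory.iIndepFun T P)
    (hTlaw : ∀ i, P.map (T i) = ν) :
    ∀ᵐ ω ∂P, Filter.Tendsto
      (fun n : ℕ => sSup ((fun a => dist a c) ''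
        {y : K | ∀ y' : K,
          (1 / (n : ℝ)) * ∑ i ∈ Finset.range n, dist (T i ω) y ≤
          (1 / (n : ℝ)) * ∑ i ∈ Finset.range n, dist (T i ω) y'}))
      Filter.atTop (nhds 0) :=
  sverdrup_thygeson_lln_general ν c hc P T hTmeas hTindep hTlaw
end

section
/- Let ν be a Borel probability measure on (𝒯,d), and for v ∈ Ṽ set p_v = ν({x ∈ 𝒯 : x(v) = 1}). Then for every y ∈ 𝒯, g(y) = ∫ d(x,y) dν(x) = Σ_{v∈Ṽ} φ(v)(p_v + (1 − 2p_v) y(v)). Moreover: (i) the function y* : Ṽ → {0,1} defined by y*(v) = 1 if and only if p_v > 1/2 is an element of 𝒯; (ii) a tree y ∈ 𝒯 belongs to the d-mean set E_d(ν) = argmin_{𝒯} g if and only if y(v) = 1 for every v with p_v > 1/2 and y(v) = 0 for every v with p_v < 1/2. -/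
open MeasureTheory

abbrev Vtx (m : ℕ) := List (Fin m)

def IsTree {m : ℕ} (x : Vtx m → Bool) : Prop :=
  ∀ (v : Vtx m) (a : Fin m), x (v ++ [a]) = true → x v = true

/-- The space 𝒯 of trees (with the Borel = product σ-field). -/
abbrev TreeSp (m : ℕ) := {x : Vtx m → Bool // IsTree x}

noncomputable def treeDist {m : ℕ} (φ : Vtx m → ℝ) (x y : Vtx m → Bool) : ℝ :=
  ∑' v : Vtx m, φ v * |(if x v then (1 : ℝ) else 0) - (if y v then (1 : ℝ) else 0)|

/-!
Each coordinate of d contributes independently to g: the expected distance from a random bit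
that equals 1 with probability p to a fixed bit b is p + (1 - 2p) b. Hence g is a separable sum,
minimized coordinatewise by the majority vote y*, which is a tree because p decreases from a
vertex to its children. A tree y is then a minimizer iff no coordinate of y does worse than y*,
since a single strictly larger term makes the whole (summable) sum strictly larger.
-/

def meanBitDist (p : ℝ) (b : Bool) : ℝ :=
  p + (1 - 2 * p) * if b then 1 else 0

noncomputable def majority {ι : Type*} (p : ι → ℝ) (v : ι) : Bool :=
  decide (1 / 2 < p v)

section meanBitDist

variable {p : ℝ}

@[simp] lemma meanBitDist_true (p : ℝ) : meanBitDist p true = 1 - p := by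
  simp [meanBitDist]; ring

@[simp] lemma meanBitDist_false (p : ℝ) : meanBitDist p false = p := by
  simp [meanBitDist]

lemma meanBitDist_mem_Icc (hp : p ∈ Set.Icc 0 1) (b : Bool) :
    meanBitDist p b ∈ Set.Icc 0 1 := by
  obtain ⟨hp0, hp1⟩ := hp
  cases b <;> simp <;> constructor <;> linarith

lemma meanBitDist_decide_le (p : ℝ) (b : Bool) :
    meanBitDist p (decide (1 / 2 < p)) ≤ meanBitDist p b := by
  by_cases h : 1 / 2 < p <;> cases b <;>
    simp only [h, decide_true, decide_false, meanBitDist_true, meanBitDist_false] <;> grind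

lemma meanBitDist_le_decide_iff (b : Bool) :
    meanBitDist p b ≤ meanBitDist p (decide (1 / 2 < p)) ↔
      (1 / 2 < p → b = true) ∧ (p < 1 / 2 → b = false) := by
  by_cases h : 1 / 2 < p <;> cases b <;>
    simp only [h, decide_true, decide_false, meanBitDist_true, meanBitDist_false] <;> grind

end meanBitDist

lemma measurable_ite_one_zero {α : Type*} [MeasurableSpace α] {f : α → Bool}
    (hf : Measurable f) : Measurable fun x => if f x then (1 : ℝ) else 0 :=
  Measurable.ite (hf (measurableSet_singleton true)) measurable_const measurable_const

lemma integral_ite_one_zero {α : Type*} [MeasurableSpace α] (μ : Measure α) {f : α → Bool}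
    (hf : Measurable f) : ∫ x, (if f x then (1 : ℝ) else 0) ∂μ = μ.real {x | f x = true} := by
  have hs : MeasurableSet {x | f x = true} := hf (measurableSet_singleton true)
  rw [← integral_indicator_one hs]
  congr with x
  simp [Set.indicator_apply]

lemma integral_abs_ite_sub_ite {α : Type*} [MeasurableSpace α] (μ : Measure α)
    [IsProbabilityMeasure μ] {f : α → Bool} (hf : Measurable f) (b : Bool) :
    ∫ x, |(if f x then (1 : ℝ) else 0) - (if b then 1 else 0)| ∂μ
      = meanBitDist (μ.real {x | f x = true}) b := by
  have hint : Integrable (fun x => if f x then (1 : ℝ) else 0) μ :=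
    .of_bound (measurable_ite_one_zero hf).aestronglyMeasurable 1
      (.of_forall fun x => by split_ifs <;> simp)
  have habs : ∀ x, |(if f x then (1 : ℝ) else 0) - (if b then 1 else 0)|
      = if b then 1 - (if f x then 1 else 0) else if f x then 1 else 0 := by
    intro x; cases b <;> split_ifs <;> simp
  simp only [habs]
  cases b
  · simp [integral_ite_one_zero μ hf]
  · simp [integral_sub (integrable_const 1) hint, integral_ite_one_zero μ hf]

lemma integral_tsum_of_norm_le {ι α E : Type*} [Countable ι] [MeasurableSpace α]
    [NormedAddCommGroup E] [NormedSpace ℝ E] {μ : Measure α} [IsFiniteMeasure μ]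
    {F : ι → α → E} {C : ι → ℝ} (hF : ∀ i, AEStronglyMeasurable (F i) μ)
    (hFC : ∀ i x, ‖F i x‖ ≤ C i) (hC : Summable C) :
    ∫ x, ∑' i, F i x ∂μ = ∑' i, ∫ x, F i x ∂μ := by
  have hint i : Integrable (F i) μ := .of_bound (hF i) (C i) (.of_forall (hFC i))
  refine (integral_tsum_of_summable_integral_norm hint ?_).symm
  refine .of_nonneg_of_le (fun i => integral_nonneg fun x => norm_nonneg _) (fun i => ?_)
    (hC.mul_left (μ.real Set.univ))
  calc ∫ x, ‖F i x‖ ∂μ ≤ ∫ _, C i ∂μ :=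
        integral_mono (hint i).norm (integrable_const _) (hFC i)
    _ = μ.real Set.univ * C i := by rw [integral_const, smul_eq_mul]

lemma integral_treeDist {m : ℕ} {α : Type*} [MeasurableSpace α] (μ : Measure α)
    [IsProbabilityMeasure μ] {φ : Vtx m → ℝ} (hφ : Summable φ) {X : α → Vtx m → Bool}
    (hX : ∀ v, Measurable fun x => X x v) (y : Vtx m → Bool) :
    ∫ x, treeDist φ (X x) y ∂μ = ∑' v, φ v * meanBitDist (μ.real {x | X x v = true}) (y v) := by
  have hbit : ∀ (a b : Bool), |(if a then (1 : ℝ) else 0) - (if b then 1 else 0)| ≤ 1 := by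
    intro a b; cases a <;> cases b <;> norm_num
  unfold treeDist
  rw [integral_tsum_of_norm_le (C := fun v => |φ v|)
    (fun v => ((measurable_ite_one_zero (hX v)).sub_const _).abs.const_mul _
      |>.aestronglyMeasurable)
    (fun v x => by simpa [abs_mul] using mul_le_of_le_one_right (abs_nonneg _) (hbit _ _))
    hφ.abs]
  exact tsum_congr fun v => by rw [integral_const_mul, integral_abs_ite_sub_ite μ (hX v)]

lemma tsum_le_tsum_iff_of_le {ι : Type*} {f g : ι → ℝ} (hgf : ∀ i, g i ≤ f i)
    (hf : Summable f) (hg : Summable g) : ∑' i, f i ≤ ∑' i, g i ↔ ∀ i, f i ≤ g i := by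
  refine ⟨fun h i => not_lt.mp fun hlt => h.not_gt (hg.tsum_lt_tsum hgf hlt hf), fun h => ?_⟩
  exact hf.tsum_le_tsum h hg

section WeightedSum

variable {ι : Type*} {φ p : ι → ℝ}

lemma summable_mul_meanBitDist (hφ0 : ∀ v, 0 ≤ φ v) (hφ : Summable φ)
    (hp : ∀ v, p v ∈ Set.Icc 0 1) (y : ι → Bool) :
    Summable fun v => φ v * meanBitDist (p v) (y v) :=
  .of_nonneg_of_le (fun v => mul_nonneg (hφ0 v) (meanBitDist_mem_Icc (hp v) _).1)
    (fun v => mul_le_of_le_one_right (hφ0 v) (meanBitDist_mem_Icc (hp v) _).2) hφ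

lemma tsum_mul_meanBitDist_majority_le (hφ0 : ∀ v, 0 ≤ φ v) (hφ : Summable φ)
    (hp : ∀ v, p v ∈ Set.Icc 0 1) (y : ι → Bool) :
    ∑' v, φ v * meanBitDist (p v) (majority p v) ≤ ∑' v, φ v * meanBitDist (p v) (y v) :=
  (summable_mul_meanBitDist hφ0 hφ hp _).tsum_le_tsum
    (fun v => mul_le_mul_of_nonneg_left (meanBitDist_decide_le _ _) (hφ0 v))
    (summable_mul_meanBitDist hφ0 hφ hp _)

lemma tsum_mul_meanBitDist_le_majority_iff (hφ0 : ∀ v, 0 < φ v) (hφ : Summable φ)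
    (hp : ∀ v, p v ∈ Set.Icc 0 1) (y : ι → Bool) :
    ∑' v, φ v * meanBitDist (p v) (y v) ≤ ∑' v, φ v * meanBitDist (p v) (majority p v) ↔
      (∀ v, 1 / 2 < p v → y v = true) ∧ (∀ v, p v < 1 / 2 → y v = false) := by
  have hφ0' v := (hφ0 v).le
  rw [tsum_le_tsum_iff_of_le (g := fun v => φ v * meanBitDist (p v) (majority p v))
    (fun v => mul_le_mul_of_nonneg_left (meanBitDist_decide_le _ _) (hφ0' v))
    (summable_mul_meanBitDist hφ0' hφ hp _) (summable_mul_meanBitDist hφ0' hφ hp _)]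
  simp only [mul_le_mul_iff_of_pos_left (hφ0 _), majority, meanBitDist_le_decide_iff, forall_and]

end WeightedSum

lemma isTree_majority {m : ℕ} {p : Vtx m → ℝ} (hp : ∀ v a, p (v ++ [a]) ≤ p v) :
    IsTree (majority p) := by
  intro v a h
  simp only [majority, decide_eq_true_iff] at h ⊢
  exact h.trans_le (hp v a)

theorem mean_tree_characterization_general (m : ℕ) (φ : Vtx m → ℝ)
    (hφpos : ∀ v, 0 < φ v) (hφ : Summable φ)
    (ν : Measure (TreeSp m)) [IsProbabilityMeasure ν]
    (p : Vtx m → ℝ) (hp : ∀ v, p v = (ν {x : TreeSp m | x.1 v = true}).toReal) :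
    (∀ y : TreeSp m,
      (∫ x, treeDist φ x.1 y.1 ∂ν)
        = ∑' v : Vtx m, φ v * (p v + (1 - 2 * p v) * (if y.1 v then (1 : ℝ) else 0))) ∧
    (∃ ystar : Vtx m → Bool, (∀ v, ystar v = true ↔ 1 / 2 < p v) ∧ IsTree ystar) ∧
    (∀ y : TreeSp m,
      ((∀ y' : TreeSp m, (∫ x, treeDist φ x.1 y.1 ∂ν) ≤ ∫ x, treeDist φ x.1 y'.1 ∂ν)
        ↔ ((∀ v, 1 / 2 < p v → y.1 v = true) ∧ (∀ v, p v < 1 / 2 → y.1 v = false)))) := by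
  have hg (y : TreeSp m) :
      ∫ x, treeDist φ x.1 y.1 ∂ν = ∑' v, φ v * meanBitDist (p v) (y.1 v) := by
    rw [funext hp]
    exact integral_treeDist ν hφ (fun v => (measurable_pi_apply v).comp measurable_subtype_coe) y.1
  have hp01 v : p v ∈ Set.Icc 0 1 := hp v ▸ ⟨measureReal_nonneg, measureReal_le_one⟩
  have htree : IsTree (majority p) :=
    isTree_majority fun v a => hp v ▸ hp (v ++ [a]) ▸ measureReal_mono fun x hx => x.2 v a hx
  refine ⟨hg, ⟨majority p, fun v => decide_eq_true_iff, htree⟩, fun y => ?_⟩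
  set ystar : TreeSp m := ⟨majority p, htree⟩
  calc (∀ y' : TreeSp m, ∫ x, treeDist φ x.1 y.1 ∂ν ≤ ∫ x, treeDist φ x.1 y'.1 ∂ν)
      ↔ ∫ x, treeDist φ x.1 y.1 ∂ν ≤ ∫ x, treeDist φ x.1 ystar.1 ∂ν := by
        refine ⟨fun h => h ystar, fun h y' => h.trans ?_⟩
        rw [hg, hg]
        exact tsum_mul_meanBitDist_majority_le (fun v => (hφpos v).le) hφ hp01 y'.1
    _ ↔ _ := by
        rw [hg, hg]
        exact tsum_mul_meanBitDist_le_majority_iff hφpos hφ hp01 y.1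

/-- Let ν be a Borel probability measure on (𝒯,d), and p_v = ν{x : x(v)=1}. Then
g(y) = ∫ d(x,y) dν(x) = Σ_v φ(v)(p_v + (1−2p_v) y(v)); moreover (i) y*(v) = 1 iff
p_v > 1/2 defines an element of 𝒯, and (ii) y ∈ argmin g iff y(v) = 1 whenever
p_v > 1/2 and y(v) = 0 whenever p_v < 1/2. -/
theorem mean_tree_characterization (m : ℕ) (hm : 1 ≤ m) (φ : Vtx m → ℝ)
    (hφpos : ∀ v, 0 < φ v) (hφ : Summable φ)
    (ν : Measure (TreeSp m)) [IsProbabilityMeasure ν]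
    (p : Vtx m → ℝ) (hp : ∀ v, p v = (ν {x : TreeSp m | x.1 v = true}).toReal) :
    (∀ y : TreeSp m,
      (∫ x, treeDist φ x.1 y.1 ∂ν)
        = ∑' v : Vtx m, φ v * (p v + (1 - 2 * p v) * (if y.1 v then (1 : ℝ) else 0))) ∧
    (∃ ystar : Vtx m → Bool, (∀ v, ystar v = true ↔ 1 / 2 < p v) ∧ IsTree ystar) ∧
    (∀ y : TreeSp m,
      ((∀ y' : TreeSp m, (∫ x, treeDist φ x.1 y.1 ∂ν) ≤ ∫ x, treeDist φ x.1 y'.1 ∂ν)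
        ↔ ((∀ v, 1 / 2 < p v → y.1 v = true) ∧ (∀ v, p v < 1 / 2 → y.1 v = false)))) :=
  mean_tree_characterization_general m φ hφpos hφ ν p hp
end

section
/- Let n be an odd positive integer and let T_1,…,T_n ∈ 𝒯. Then the empirical mean distance g_n(y) = (1/n) Σ_{i=1}^n d(T_i,y) has a unique minimizer over 𝒯, namely the tree y* defined by y*(v) = 1 if and only if #{i : T_i(v) = 1} > n/2 (in particular this y* satisfies the tree condition y*(v) ≥ y*(va)). -/
/-- For an odd sample size n and trees T₁,…,Tₙ, the empirical mean distance
g_n(y) = (1/n) Σ d(T_i,y) has a unique minimizer over 𝒯, namely the majority-rule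
tree y* with y*(v) = 1 iff #{i : T_i(v)=1} > n/2; in particular y* is a tree. -/
theorem empirical_mean_unique_odd (m : ℕ) (hm : 1 ≤ m) (φ : Vtx m → ℝ)
    (hφpos : ∀ v, 0 < φ v) (hφ : Summable φ)
    (n : ℕ) (hn : Odd n) (hnpos : 0 < n)
    (T : Fin n → Vtx m → Bool) (hT : ∀ i, IsTree (T i))
    (ystar : Vtx m → Bool)
    (hystar : ∀ v : Vtx m,
      ystar v = true ↔ (n : ℝ) / 2 < (Finset.univ.filter fun i => T i v = true).card) :
    IsTree ystar ∧
    {y : Vtx m → Bool | IsTree y ∧ ∀ y' : Vtx m → Bool, IsTree y' →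
        (1 / (n : ℝ)) * ∑ i : Fin n, treeDist φ (T i) y ≤
        (1 / (n : ℝ)) * ∑ i : Fin n, treeDist φ (T i) y'}
      = {ystar} := by
  classical
  set k : Vtx m → ℝ := fun v => ((Finset.univ.filter fun i => T i v = true).card : ℝ) with hk
  set c : Vtx m → Bool → ℝ :=
    fun v b => ∑ i : Fin n, |(if T i v then (1 : ℝ) else 0) - (if b then 1 else 0)| with hc
  have hcount : ∀ v, ∑ i : Fin n, (if T i v then (1 : ℝ) else 0) = k v := by
    intro v
    simp [hk, Finset.sum_boole]
  have hcf : ∀ v, c v false = k v := by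
    intro v
    rw [hc, ← hcount v]
    refine Finset.sum_congr rfl fun i _ => ?_
    by_cases h : T i v <;> simp [h]
  have hct : ∀ v, c v true = n - k v := by
    intro v
    have h1 : c v true = ∑ i : Fin n, (1 - (if T i v then (1 : ℝ) else 0)) := by
      rw [hc]
      exact Finset.sum_congr rfl fun i _ => by by_cases h : T i v <;> simp [h]
    rw [h1, Finset.sum_sub_distrib, hcount v]
    simp
  -- n odd ⇒ k v ≠ n/2
  have hkne : ∀ v, k v ≠ (n : ℝ) / 2 := by
    intro v h
    have h2 : (n : ℝ) = 2 * ((Finset.univ.filter fun i => T i v = true).card : ℝ) := by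
      rw [hk] at h; field_simp at h; linarith
    have h3 : n = 2 * (Finset.univ.filter fun i => T i v = true).card := by
      exact_mod_cast h2
    rcases hn with ⟨c0, hc0⟩
    omega
  -- strict pointwise optimality of ystar
  have hkey : ∀ (v : Vtx m) (b : Bool), b ≠ ystar v → c v (ystar v) < c v b := by
    intro v b hb
    by_cases hy : ystar v = true
    · have hmaj : (n : ℝ) / 2 < k v := (hystar v).mp hy
      have hb' : b = false := by cases b <;> simp_all
      rw [hy, hb', hct, hcf]
      linarith
    · have hmaj : ¬ ((n : ℝ) / 2 < k v) := fun h => hy ((hystar v).mpr h)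
      have hklt : k v < (n : ℝ) / 2 := lt_of_le_of_ne (not_lt.mp hmaj) (hkne v)
      have hy' : ystar v = false := by cases h : ystar v <;> simp_all
      have hb' : b = true := by cases b <;> simp_all
      rw [hy', hb', hct, hcf]
      linarith
  have hkeyle : ∀ (v : Vtx m) (b : Bool), c v (ystar v) ≤ c v b := by
    intro v b
    by_cases hb : b = ystar v
    · rw [hb]
    · exact (hkey v b hb).le
  -- ystar is a tree
  have hystarTree : IsTree ystar := by
    intro v a h
    rw [hystar] at h ⊢
    refine lt_of_lt_of_le h ?_
    have hsub : (Finset.univ.filter fun i => T i (v ++ [a]) = true) ⊆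
        (Finset.univ.filter fun i => T i v = true) := by
      intro i hi
      simp only [Finset.mem_filter, Finset.mem_univ, true_and] at hi ⊢
      exact hT i v a hi
    exact_mod_cast Finset.card_le_card hsub
  -- summability of per-tree distance summands
  have hsumd : ∀ (x y : Vtx m → Bool),
      Summable (fun v => φ v * |(if x v then (1 : ℝ) else 0) - (if y v then (1 : ℝ) else 0)|) := by
    intro x y
    refine Summable.of_nonneg_of_le (fun v => mul_nonneg (hφpos v).le (abs_nonneg _)) (fun v => ?_) hφ
    have : |(if x v then (1 : ℝ) else 0) - (if y v then (1 : ℝ) else 0)| ≤ 1 := by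
      by_cases h1 : x v <;> by_cases h2 : y v <;> simp [h1, h2]
    calc φ v * |(if x v then (1 : ℝ) else 0) - (if y v then (1 : ℝ) else 0)|
        ≤ φ v * 1 := mul_le_mul_of_nonneg_left this (hφpos v).le
      _ = φ v := mul_one _
  -- exchange of sums
  have hswap : ∀ y : Vtx m → Bool,
      ∑ i : Fin n, treeDist φ (T i) y = ∑' v : Vtx m, φ v * c v (y v) := by
    intro y
    unfold treeDist
    rw [← Summable.tsum_finsetSum (fun i _ => hsumd (T i) y)]
    refine tsum_congr fun v => ?_
    rw [hc, Finset.mul_sum]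
  -- summability of the combined cost
  have hGsum : ∀ y : Vtx m → Bool, Summable (fun v => φ v * c v (y v)) := by
    intro y
    have : (fun v => φ v * c v (y v)) =
        fun v => ∑ i : Fin n, φ v * |(if T i v then (1 : ℝ) else 0) - (if y v then 1 else 0)| := by
      funext v
      rw [hc, Finset.mul_sum]
    rw [this]
    exact summable_sum fun i _ => hsumd (T i) y
  -- ystar minimizes
  have hle : ∀ y : Vtx m → Bool,
      ∑' v : Vtx m, φ v * c v (ystar v) ≤ ∑' v : Vtx m, φ v * c v (y v) :=
    fun y => Summable.tsum_le_tsum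
      (fun v => mul_le_mul_of_nonneg_left (hkeyle v (y v)) (hφpos v).le)
      (hGsum ystar) (hGsum y)
  have hstrict : ∀ y : Vtx m → Bool, y ≠ ystar →
      ∑' v : Vtx m, φ v * c v (ystar v) < ∑' v : Vtx m, φ v * c v (y v) := by
    intro y hy
    obtain ⟨v, hv⟩ := Function.ne_iff.mp hy
    exact Summable.tsum_lt_tsum
      (fun w => mul_le_mul_of_nonneg_left (hkeyle w (y w)) (hφpos w).le)
      ((mul_lt_mul_iff_right₀ (hφpos v)).mpr (hkey v (y v) hv))
      (hGsum ystar) (hGsum y)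
  have hnR : (0 : ℝ) < 1 / (n : ℝ) := by positivity
  refine ⟨hystarTree, ?_⟩
  ext y
  simp only [Set.mem_setOf_eq, Set.mem_singleton_iff]
  constructor
  · rintro ⟨hy, hmin⟩
    by_contra hne
    have h1 := hmin ystar hystarTree
    rw [hswap y, hswap ystar] at h1
    have h2 := hstrict y hne
    nlinarith
  · rintro rfl
    refine ⟨hystarTree, fun y' hy' => ?_⟩
    rw [hswap y, hswap y']
    exact mul_le_mul_of_nonneg_left (hle y') hnR.le
end
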